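/- For an odd prime p and i >= 1, the complemented cycling register CCR_n with n = 2^i * p generates exactly 2^{2^i - i - 1} self-dual sequences of period 2^{i+1} and exactly (2^{2^i p} - 2^{2^i}) / (2^{i+1} p) self-dual sequences of period 2^{i+1} p. -/

import Mathlib

/-- `d` is a period of the sequence `s`. -/
def IsPeriodOf (s : ℕ → ZMod 2) (d : ℕ) : Prop := ∀ i, s (i + d) = s i

/-- `d` is the least (exact) period of `s`. -/
def IsLeastPeriod (s : ℕ → ZMod 2) (d : ℕ) : Prop :=
  0 < d ∧ IsPeriodOf s d ∧ ∀ e, 0 < e → IsPeriodOf s e → d ≤ e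

/-- The number of self-dual binary cyclic sequences (counted up to cyclic shift)
of least period exactly `d`: a self-dual sequence of period `d` satisfies
`s (j + d/2) = s j + 1` for all `j`.  These are exactly the cycles of `CCR_n`
for each `n` with `d ∣ 2n` and `d ∤ n`. -/
noncomputable def SD (d : ℕ) : ℕ :=
  Nat.card {O : Set (ℕ → ZMod 2) // ∃ s : ℕ → ZMod 2,
    IsLeastPeriod s d ∧ (∀ j, s (j + d / 2) = s j + 1) ∧
    O = {t | ∃ k : ℕ, ∀ i, t i = s (i + k)}}

/-!
A sequence that is self-dual with half-period `h`, i.e. `s (j + h) = s j + 1`, is determined by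
its first `h` terms, so there are `2^h` of them, and its least period divides `2h` but not `h`.
For `h = 2^i` this forces least period `2^{i+1}`. For `h = 2^i p` it leaves `2^{i+1}` and
`2^{i+1} p`, and as `p` is odd the least period is `2^{i+1}` exactly for the sequences that are
already self-dual with half-period `2^i`. Under the shift, a sequence of least period `d` lies on
an orbit of exactly `d` sequences, so the number of cycles is the number of sequences over `d`.
-/

open Function

section Orbits

variable {α : Type*} {f : α → α} {x : α}

theorem range_iterate_eq_periodicOrbit (hx : x ∈ periodicPts f) :
    Set.range (f^[·] x) = {y | y ∈ periodicOrbit f x} := by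
  ext y
  exact (mem_periodicOrbit_iff hx).symm

theorem range_iterate_iterate_eq (hx : x ∈ periodicPts f) (n : ℕ) :
    Set.range (f^[·] (f^[n] x)) = Set.range (f^[·] x) := by
  obtain ⟨k, hk, hkx⟩ := hx
  rw [range_iterate_eq_periodicOrbit ⟨k, hk, hkx⟩,
    range_iterate_eq_periodicOrbit (mk_mem_periodicPts hk (hkx.apply_iterate n)),
    periodicOrbit_apply_iterate_eq ⟨k, hk, hkx⟩]

theorem card_range_iterate (hx : x ∈ periodicPts f) :
    Nat.card (Set.range (f^[·] x)) = minimalPeriod f x := by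
  have hrange : Set.range (f^[·] x) = Set.range fun n : Fin (minimalPeriod f x) => f^[n] x := by
    ext y
    constructor
    · rintro ⟨n, rfl⟩
      exact ⟨⟨n % _, Nat.mod_lt _ (minimalPeriod_pos_of_mem_periodicPts hx)⟩,
        iterate_mod_minimalPeriod_eq⟩
    · rintro ⟨n, rfl⟩
      exact ⟨n, rfl⟩
  rw [hrange, Nat.card_range_of_injective, Nat.card_fin]
  exact fun a b hab => Fin.ext (iterate_injOn_Iio_minimalPeriod a.2 b.2 hab)

theorem card_eq_card_orbits_mul {P : α → Prop} {d : ℕ} (hd : 0 < d)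
    (hP : ∀ x, P x → minimalPeriod f x = d) (hPf : ∀ x, P x → P (f x)) :
    Nat.card {x // P x} =
      Nat.card {O : Set α // ∃ x, P x ∧ O = Set.range (f^[·] x)} * d := by
  let orbit : {x // P x} → {O : Set α // ∃ x, P x ∧ O = Set.range (f^[·] x)} :=
    fun x => ⟨_, x, x.2, rfl⟩
  have hper : ∀ x, P x → x ∈ periodicPts f := fun x hx =>
    minimalPeriod_pos_iff_mem_periodicPts.1 (hP x hx ▸ hd)
  have hfiber : ∀ O, Nat.card {x // orbit x = O} = d := by
    rintro ⟨O, x, hx, rfl⟩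
    have hPiter : ∀ n, P (f^[n] x) := fun n => by
      induction n with
      | zero => exact hx
      | succ n ih => rw [iterate_succ_apply']; exact hPf _ ih
    rw [← hP x hx, ← card_range_iterate (hper x hx)]
    refine Nat.card_congr
      { toFun := fun y => ⟨y.1.1, ?_⟩
        invFun := fun y => ⟨⟨y.1, ?_⟩, ?_⟩
        left_inv := fun _ => rfl
        right_inv := fun _ => rfl }
    · have hy : y.1.1 ∈ (orbit y.1).1 := ⟨0, rfl⟩
      rwa [y.2] at hy
    · obtain ⟨_, n, rfl⟩ := y
      exact hPiter n
    · obtain ⟨_, n, rfl⟩ := y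
      exact Subtype.ext (range_iterate_iterate_eq (hper x hx) n)
  have hfiberEquiv : ∀ O, {x // orbit x = O} ≃ Fin d := fun O =>
    have : Finite {x // orbit x = O} := Nat.finite_of_card_ne_zero ((hfiber O).trans_ne hd.ne')
    Finite.equivFinOfCardEq (hfiber O)
  rw [Nat.card_congr ((Equiv.sigmaFiberEquiv orbit).symm.trans
    ((Equiv.sigmaCongrRight hfiberEquiv).trans (Equiv.sigmaEquivProd _ _))),
    Nat.card_prod, Nat.card_fin]

end Orbits

def shiftSeq {α : Type*} (s : ℕ → α) : ℕ → α := fun i => s (i + 1)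

theorem shiftSeq_iterate {α : Type*} (s : ℕ → α) (n : ℕ) :
    shiftSeq^[n] s = fun i => s (i + n) := by
  induction n with
  | zero => rfl
  | succ n ih =>
    rw [iterate_succ_apply', ih]
    funext i
    exact congrArg s (Nat.add_right_comm i 1 n)

theorem isPeriodicPt_shiftSeq_iff {α : Type*} {s : ℕ → α} {n : ℕ} :
    IsPeriodicPt shiftSeq n s ↔ ∀ i, s (i + n) = s i := by
  rw [IsPeriodicPt, IsFixedPt, shiftSeq_iterate, funext_iff]

theorem range_iterate_shiftSeq {α : Type*} (s : ℕ → α) :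
    Set.range (shiftSeq^[·] s) = {t | ∃ k : ℕ, ∀ i, t i = s (i + k)} := by
  ext t
  simp only [Set.mem_range, Set.mem_ofPred_eq, shiftSeq_iterate, funext_iff, eq_comm]

theorem isLeastPeriod_iff {s : ℕ → ZMod 2} {d : ℕ} :
    IsLeastPeriod s d ↔ 0 < d ∧ minimalPeriod shiftSeq s = d := by
  simp only [IsLeastPeriod, IsPeriodOf, ← isPeriodicPt_shiftSeq_iff]
  constructor
  · rintro ⟨hd, hs, hmin⟩
    refine ⟨hd, (hs.minimalPeriod_le hd).antisymm (hmin _ ?_ (isPeriodicPt_minimalPeriod _ _))⟩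
    exact minimalPeriod_pos_of_mem_periodicPts (mk_mem_periodicPts hd hs)
  · rintro ⟨hd, rfl⟩
    exact ⟨hd, isPeriodicPt_minimalPeriod _ _, fun e he hs => hs.minimalPeriod_le he⟩

theorem eq_two_pow_succ_or_eq_of_dvd {p i e : ℕ} (hp : p.Prime) (hdvd : e ∣ 2 ^ (i + 1) * p)
    (hndvd : ¬ e ∣ 2 ^ i * p) : e = 2 ^ (i + 1) ∨ e = 2 ^ (i + 1) * p := by
  obtain ⟨a, b, ha, hb, rfl⟩ := Nat.dvd_mul.1 hdvd
  obtain ⟨k, hk, rfl⟩ := (Nat.dvd_prime_pow Nat.prime_two).1 ha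
  obtain rfl : k = i + 1 := by
    by_contra hne
    exact hndvd (mul_dvd_mul (pow_dvd_pow 2 (by omega)) hb)
  rcases (Nat.dvd_prime hp).1 hb with rfl | rfl
  · exact .inl (mul_one _)
  · exact .inr rfl

def IsSelfDual (h : ℕ) (s : ℕ → ZMod 2) : Prop := ∀ j, s (j + h) = s j + 1

theorem IsSelfDual.shiftSeq {h : ℕ} {s : ℕ → ZMod 2} (hs : IsSelfDual h s) :
    IsSelfDual h (shiftSeq s) :=
  fun j => (congrArg s (Nat.add_right_comm j h 1)).trans (hs (j + 1))

namespace IsSelfDual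

variable {h i p : ℕ} {s : ℕ → ZMod 2}

theorem add_mul (hs : IsSelfDual h s) (j k : ℕ) : s (j + h * k) = s j + k := by
  induction k with
  | zero => simp
  | succ k ih =>
    rw [Nat.mul_succ, ← Nat.add_assoc, hs, ih]
    push_cast
    ring

theorem eq_mod_add_div (hs : IsSelfDual h s) (i : ℕ) : s i = s (i % h) + (i / h : ℕ) := by
  rw [← hs.add_mul, Nat.mod_add_div]

theorem isPeriodicPt_two_mul (hs : IsSelfDual h s) : IsPeriodicPt _root_.shiftSeq (2 * h) s :=
  isPeriodicPt_shiftSeq_iff.2 fun j => by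
    rw [mul_comm, hs.add_mul, ZMod.natCast_self, add_zero]

theorem not_isPeriodicPt (hs : IsSelfDual h s) : ¬ IsPeriodicPt _root_.shiftSeq h s :=
  fun hper => by simpa using (isPeriodicPt_shiftSeq_iff.1 hper 0).symm.trans (hs 0)

theorem minimalPeriod_dvd (hs : IsSelfDual h s) : minimalPeriod _root_.shiftSeq s ∣ 2 * h :=
  hs.isPeriodicPt_two_mul.minimalPeriod_dvd

theorem not_minimalPeriod_dvd (hs : IsSelfDual h s) : ¬ minimalPeriod _root_.shiftSeq s ∣ h :=
  fun hdvd => hs.not_isPeriodicPt (isPeriodicPt_iff_minimalPeriod_dvd.2 hdvd)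

theorem mul_odd (hs : IsSelfDual h s) {m : ℕ} (hm : Odd m) : IsSelfDual (h * m) s :=
  fun j => by rw [hs.add_mul, ZMod.natCast_eq_one_iff_odd.2 hm]

theorem of_mul_odd {m : ℕ} (hs : IsSelfDual (h * m) s) (hm : Odd m)
    (hper : IsPeriodicPt _root_.shiftSeq (2 * h) s) : IsSelfDual h s := fun j => by
  obtain ⟨c, rfl⟩ := hm
  rw [← hs j, ← isPeriodicPt_shiftSeq_iff.1 (hper.mul_const c) (j + h)]
  congr 1
  ring

theorem minimalPeriod_eq_two_pow (hs : IsSelfDual (2 ^ i) s) :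
    minimalPeriod _root_.shiftSeq s = 2 * 2 ^ i := by
  obtain ⟨k, hk, hmin⟩ :=
    (Nat.dvd_prime_pow Nat.prime_two).1 (pow_succ' 2 i ▸ hs.minimalPeriod_dvd)
  obtain rfl : k = i + 1 := by
    by_contra hne
    exact hs.not_minimalPeriod_dvd (hmin ▸ pow_dvd_pow 2 (by omega))
  rw [hmin, pow_succ']

theorem minimalPeriod_eq_two_pow_mul (hp : p.Prime) (hodd : Odd p)
    (hs : IsSelfDual (2 ^ i * p) s) (hns : ¬ IsSelfDual (2 ^ i) s) :
    minimalPeriod _root_.shiftSeq s = 2 * (2 ^ i * p) := by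
  have hdvd : minimalPeriod _root_.shiftSeq s ∣ 2 ^ (i + 1) * p := by
    rw [pow_succ', mul_assoc]
    exact hs.minimalPeriod_dvd
  rcases eq_two_pow_succ_or_eq_of_dvd hp hdvd hs.not_minimalPeriod_dvd with hmin | hmin
  · refine absurd (hs.of_mul_odd hodd (isPeriodicPt_iff_minimalPeriod_dvd.2 ?_)) hns
    rw [hmin, pow_succ']
  · rw [hmin, pow_succ', mul_assoc]

theorem not_isSelfDual_two_pow_iff (hp : p.Prime) (hodd : Odd p)
    (hs : IsSelfDual (2 ^ i * p) s) :
    ¬ IsSelfDual (2 ^ i) s ↔ minimalPeriod _root_.shiftSeq s = 2 * (2 ^ i * p) := by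
  refine ⟨hs.minimalPeriod_eq_two_pow_mul hp hodd, fun hmin hs' => hp.ne_one ?_⟩
  rw [hs'.minimalPeriod_eq_two_pow, Nat.mul_right_inj two_ne_zero] at hmin
  simpa using hmin.symm

end IsSelfDual

def selfDualEquiv {h : ℕ} (hh : 0 < h) : {s // IsSelfDual h s} ≃ (Fin h → ZMod 2) where
  toFun s j := s.1 j
  invFun f := ⟨fun i => f ⟨i % h, Nat.mod_lt _ hh⟩ + (i / h : ℕ), fun j => by
    simp only [Nat.add_mod_right, Nat.add_div_right _ hh]
    push_cast
    ring⟩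
  left_inv s := Subtype.ext <| funext fun i => (s.2.eq_mod_add_div i).symm
  right_inv f := funext fun j => by simp [Nat.mod_eq_of_lt j.2, Nat.div_eq_of_lt j.2]

theorem card_isSelfDual {h : ℕ} (hh : 0 < h) : Nat.card {s // IsSelfDual h s} = 2 ^ h := by
  rw [Nat.card_congr (selfDualEquiv hh), Nat.card_fun, Nat.card_zmod, Nat.card_fin]

theorem card_isSelfDual_minimalPeriod_eq_SD_mul {h : ℕ} (hh : 0 < h) :
    Nat.card {s // IsSelfDual h s ∧ minimalPeriod shiftSeq s = 2 * h} = SD (2 * h) * (2 * h) := by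
  have hhalf : 2 * h / 2 = h := by omega
  have hshift : ∀ s, IsSelfDual h s ∧ minimalPeriod shiftSeq s = 2 * h →
      IsSelfDual h (shiftSeq s) ∧ minimalPeriod shiftSeq (shiftSeq s) = 2 * h := fun s hs =>
    ⟨hs.1.shiftSeq, by
      rw [minimalPeriod_apply (minimalPeriod_pos_iff_mem_periodicPts.1 (by omega)), hs.2]⟩
  rw [card_eq_card_orbits_mul (by omega) (fun s hs => hs.2) hshift, SD]
  congr 1
  refine Nat.card_congr (Equiv.subtypeEquivRight fun O => ?_)
  simp only [isLeastPeriod_iff, hhalf, range_iterate_shiftSeq, IsSelfDual, hh, Nat.ofNat_pos,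
    mul_pos_iff_of_pos_left, true_and]
  exact exists_congr fun s => by tauto

theorem card_isSelfDual_two_pow (i : ℕ) :
    Nat.card {s // IsSelfDual (2 ^ i) s ∧ minimalPeriod shiftSeq s = 2 * 2 ^ i} = 2 ^ 2 ^ i := by
  rw [← card_isSelfDual (by positivity : 0 < 2 ^ i)]
  exact Nat.card_congr <|
    Equiv.subtypeEquivRight fun _ => and_iff_left_of_imp IsSelfDual.minimalPeriod_eq_two_pow

theorem card_isSelfDual_two_pow_mul_add {p : ℕ} (i : ℕ) (hp : p.Prime) (hodd : Odd p) :
    Nat.card {s // IsSelfDual (2 ^ i * p) s ∧ minimalPeriod shiftSeq s = 2 * (2 ^ i * p)} +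
      2 ^ 2 ^ i = 2 ^ (2 ^ i * p) := by
  have hn : 0 < 2 ^ i * p := Nat.mul_pos (by positivity) hp.pos
  have hsub : {s | IsSelfDual (2 ^ i) s} ⊆ {s | IsSelfDual (2 ^ i * p) s} :=
    fun s hs => IsSelfDual.mul_odd hs hodd
  have hdiff : {s | IsSelfDual (2 ^ i * p) s} \ {s | IsSelfDual (2 ^ i) s} =
      {s | IsSelfDual (2 ^ i * p) s ∧ minimalPeriod shiftSeq s = 2 * (2 ^ i * p)} := by
    ext s
    exact and_congr_right fun hs => hs.not_isSelfDual_two_pow_iff hp hodd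
  have hfin : Finite {s // IsSelfDual (2 ^ i * p) s} := Finite.of_equiv _ (selfDualEquiv hn).symm
  have hsplit := Set.ncard_sdiff_add_ncard_of_subset hsub (Set.finite_coe_iff.1 hfin)
  rw [hdiff] at hsplit
  simpa only [← Nat.card_coe_set_eq, Set.coe_ofPred, card_isSelfDual hn,
    card_isSelfDual (by positivity : 0 < 2 ^ i)] using hsplit

theorem stmt11_general (p i : ℕ) (hp : p.Prime) (hodd : Odd p) :
    SD (2 ^ (i + 1)) = 2 ^ (2 ^ i - i - 1) ∧
    SD (2 ^ (i + 1) * p) * (2 ^ (i + 1) * p) = 2 ^ (2 ^ i * p) - 2 ^ 2 ^ i := by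
  have hexp : 2 ^ i - i - 1 + (i + 1) = 2 ^ i := by
    have := Nat.lt_two_pow_self (n := i)
    omega
  constructor
  · refine Nat.eq_of_mul_eq_mul_right (by positivity : 0 < 2 ^ (i + 1)) ?_
    rw [← pow_add, hexp, pow_succ', ← card_isSelfDual_minimalPeriod_eq_SD_mul (by positivity),
      card_isSelfDual_two_pow]
  · have hcount := card_isSelfDual_two_pow_mul_add i hp hodd
    rw [card_isSelfDual_minimalPeriod_eq_SD_mul (Nat.mul_pos (by positivity) hp.pos)] at hcount
    rw [pow_succ', mul_assoc]
    omega

/-- For an odd prime `p` and `i ≥ 1`, the register `CCR_n` with `n = 2^i p`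
generates exactly `2^{2^i - i - 1}` self-dual sequences of period `2^{i+1}` and
exactly `(2^{2^i p} - 2^{2^i}) / (2^{i+1} p)` self-dual sequences of period
`2^{i+1} p` (the cycles of `CCR_n` being exactly the self-dual sequences of
least period `d` with `d ∣ 2n`, `d ∤ n`, i.e. `d = 2^{i+1}` or `d = 2^{i+1} p`). -/
theorem stmt11 (p i : ℕ) (hp : p.Prime) (hodd : Odd p) (hi : 1 ≤ i) :
    SD (2 ^ (i + 1)) = 2 ^ (2 ^ i - i - 1) ∧
    SD (2 ^ (i + 1) * p) * (2 ^ (i + 1) * p) = 2 ^ (2 ^ i * p) - 2 ^ 2 ^ i :=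
  stmt11_general p i hp hodd
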